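/- Let σ be a state with q = ch(σ) ≥ 1 and let Q be any question, with resulting yes-state σ_yes and no-state σ_no. If |w_{q−1}(σ_yes) − w_{q−1}(σ_no)| ≤ 1, then ch(σ_yes) ≤ q−1 and ch(σ_no) ≤ q−1. -/
import Mathlib


open scoped Classical

noncomputable section

namespace UlamRenyi

/-- A state of the Ulam–Rényi game with 3 lies over a universe of size `u`:
a function `U → {0,1,2,3,4}`. -/
abbrev State (u : ℕ) := Fin u → Fin 5

variable {u : ℕ}

/-- The set of elements lying on level `i` of the state `σ`. -/
def levelSet (σ : State u) (i : ℕ) : Set (Fin u) := {y | (σ y : ℕ) = i}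

/-- The support of a state: the elements at level `≤ 3`. -/
def support (σ : State u) : Set (Fin u) := {y | (σ y : ℕ) ≤ 3}

/-- A state is final if its support has at most one element. -/
def IsFinal (σ : State u) : Prop := (support σ).Subsingleton

/-- `stCount σ i = |σ⁻¹(i)|`. -/
def stCount (σ : State u) (i : ℕ) : ℕ := (levelSet σ i).ncard

/-- The type of a state: `(t₀, t₁, t₂, t₃)` with `tᵢ = |σ⁻¹(i)|`. -/
def stType (σ : State u) : ℕ × ℕ × ℕ × ℕ :=
  (stCount σ 0, stCount σ 1, stCount σ 2, stCount σ 3)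

/-- The state resulting from the answer *yes* to question `Q` in state `σ`:
`σ_yes(y) = min (σ(y) + 1_{y ∉ Q}, 4)`. -/
def yesState (σ : State u) (Q : Set (Fin u)) : State u := fun y =>
  ⟨min ((σ y : ℕ) + (if y ∈ Q then 0 else 1)) 4,
    Nat.lt_succ_of_le (Nat.min_le_right _ _)⟩

/-- The state resulting from the answer *no* to question `Q` in state `σ`:
`σ_no(y) = min (σ(y) + 1_{y ∈ Q}, 4)`. -/
def noState (σ : State u) (Q : Set (Fin u)) : State u := fun y =>
  ⟨min ((σ y : ℕ) + (if y ∈ Q then 1 else 0)) 4,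
    Nat.lt_succ_of_le (Nat.min_le_right _ _)⟩

/-- The state resulting from answer `b` (`true` = yes, `false` = no). -/
def ansState (σ : State u) (Q : Set (Fin u)) : Bool → State u
  | true => yesState σ Q
  | false => noState σ Q

/-- An interval of the universe: the empty set, or `[a,b] = {x | a ≤ x ≤ b}`. -/
def IsInterval (I : Set (Fin u)) : Prop :=
  I = ∅ ∨ ∃ a b : Fin u, I = Set.Icc a b

/-- A `k`-interval question: a union of at most `k` intervals. -/
def IsKIntervalQuestion (k : ℕ) (Q : Set (Fin u)) : Prop :=
  ∃ I : Fin k → Set (Fin u), (∀ t, IsInterval (I t)) ∧ Q = ⋃ t, I t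

/-- The type of a question with respect to a state: `aᵢ = |Q ∩ σ⁻¹(i)|`. -/
def qType (σ : State u) (Q : Set (Fin u)) (i : ℕ) : ℕ :=
  (Q ∩ levelSet σ i).ncard

/-- A strategy: a labelling of the nodes of the complete binary tree
(identified with finite lists of answers, `true` = yes) by questions. -/
abbrev Strategy (u : ℕ) := List Bool → Set (Fin u)

/-- The state reached from `σ` by playing strategy `S` along the answer sequence `bs`. -/
def play : State u → Strategy u → List Bool → State u
  | σ, _, [] => σ
  | σ, S, b :: bs => play (ansState σ (S []) b) (fun l => S (b :: l)) bs

/-- `S` is a winning strategy of size `q` for state `σ`: along every root-to-leaf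
path of length `q` the resulting state is final. -/
def IsWinning (σ : State u) (S : Strategy u) (q : ℕ) : Prop :=
  ∀ bs : List Bool, bs.length = q → IsFinal (play σ S bs)

/-- All the questions asked by `S` in a game of `q` rounds are `k`-interval questions. -/
def UsesKIntervals (S : Strategy u) (q k : ℕ) : Prop :=
  ∀ bs : List Bool, bs.length < q → IsKIntervalQuestion k (S bs)

/-- `binSum q e = ∑_{ℓ=0}^{e} C(q,ℓ)`. -/
def binSum (q e : ℕ) : ℕ := ∑ ℓ ∈ Finset.range (e + 1), Nat.choose q ℓ

/-- The `q`-th volume of a state: `w_q(σ) = ∑_{j=0}^{3} |σ⁻¹(j)| ∑_{ℓ=0}^{3-j} C(q,ℓ)`. -/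
def vol (σ : State u) (q : ℕ) : ℕ :=
  ∑ j ∈ Finset.range 4, stCount σ j * binSum q (3 - j)

/-- The character of a state: `ch(σ) = min {q : w_q(σ) ≤ 2^q}`. -/
def ch (σ : State u) : ℕ := sInf {q | vol σ q ≤ 2 ^ q}

/-- `N_min(2^m, 3) = min {q : 2^{q-m} ≥ ∑_{i=0}^{3} C(q,i)}`. -/
def Nmin (m : ℕ) : ℕ := sInf {q | 2 ^ m * binSum q 3 ≤ 2 ^ q}

/-- The initial, constant-0, state. -/
def initState (u : ℕ) : State u := fun _ => 0

/-- Cyclic successor of an index. -/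
def cSucc {r : ℕ} (i : Fin r) : Fin r := ⟨(i.val + 1) % r, Nat.mod_lt _ i.pos⟩

/-- Cyclic predecessor of an index. -/
def cPred {r : ℕ} (i : Fin r) : Fin r := ⟨(i.val + (r - 1)) % r, Nat.mod_lt _ i.pos⟩

/-- A cyclic list of (possibly empty) arcs representing the state `σ`:
the arcs are pairwise disjoint sets of cyclically consecutive elements of the
support, appearing around the circle in the order of their indices (with respect
to some base point of the circle), each arc lying on one level of `σ`, together
covering the support, and the levels of consecutive arcs differ by exactly 1. -/
structure ArcDecomp (σ : State u) (r : ℕ) where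
  /-- the level of each arc -/
  lvl : Fin r → ℕ
  /-- the arcs (possibly empty) -/
  arc : Fin r → Set (Fin u)
  /-- base point used to linearize the cyclic order -/
  base : Fin u
  lvl_le : ∀ i, lvl i ≤ 3
  arc_lvl : ∀ i, arc i ⊆ levelSet σ (lvl i)
  cover : ∀ y ∈ support σ, ∃! i, y ∈ arc i
  step : ∀ i : Fin r, lvl (cSucc i) = lvl i + 1 ∨ lvl i = lvl (cSucc i) + 1
  ordered : ∀ i j : Fin r, i < j → ∀ x ∈ arc i, ∀ y ∈ arc j, x - base < y - base

/-- The number of arcs of the decomposition lying on level `ℓ`. -/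
def arcCountAt {σ : State u} {r : ℕ} (d : ArcDecomp σ r) (ℓ : ℕ) : ℕ :=
  (Finset.univ.filter fun i => d.lvl i = ℓ).card

/-- The decomposition has exactly `2i+1` arcs on level `i` for `i = 0,1,2`, and
exactly `3` arcs on level `3`. -/
def GoodCounts {σ : State u} (d : ArcDecomp σ 12) : Prop :=
  arcCountAt d 0 = 1 ∧ arcCountAt d 1 = 3 ∧ arcCountAt d 2 = 5 ∧ arcCountAt d 3 = 3

/-- A state is well-shaped if its shortest cyclic arc decomposition has exactly
`2i+1` arcs on level `i` for `i = 0,1,2` and exactly `3` arcs on level `3`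
(hence length 12). -/
def IsWellShaped (σ : State u) : Prop :=
  (∀ r : ℕ, Nonempty (ArcDecomp σ r) → 12 ≤ r) ∧
  ∃ d : ArcDecomp σ 12, GoodCounts d

/-- A state of type `(t₀,t₁,t₂,t₃)` is 0-typical if `t₀ = 0`, `t₂ ≥ t₁ - 1`
and `t₃ ≥ ch(σ)`. -/
def IsZeroTypical (σ : State u) : Prop :=
  stCount σ 0 = 0 ∧ stCount σ 1 ≤ stCount σ 2 + 1 ∧ ch σ ≤ stCount σ 3

/-- A state is 4-interval nice if it is well shaped and admits a winning strategy
of size `ch(σ)` all of whose questions are 4-interval questions. -/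
def FourIntervalNice (σ : State u) : Prop :=
  IsWellShaped σ ∧
  ∃ S : Strategy u, IsWinning σ S (ch σ) ∧ UsesKIntervals S (ch σ) 4

end UlamRenyi

namespace UlamRenyi

/-- Weight of an element at level `i` in volume of order `q`. -/
def wt (q i : ℕ) : ℕ := if i ≤ 3 then binSum q (3 - i) else 0

lemma binSum_succ_succ (q e : ℕ) :
    binSum (q + 1) (e + 1) = binSum q (e + 1) + binSum q e := by
  unfold binSum
  rw [Finset.sum_range_succ' (fun ℓ => Nat.choose (q + 1) ℓ) (e + 1),
      Finset.sum_range_succ' (fun ℓ => Nat.choose q ℓ) (e + 1)]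
  simp only [Nat.choose_succ_succ, Finset.sum_add_distrib, Nat.choose_zero_right,
    Nat.succ_eq_add_one]
  omega

lemma wt_succ (q j : ℕ) (hj : j ≤ 4) :
    wt (q + 1) j = wt q j + wt q (min (j + 1) 4) := by
  interval_cases j
  · show binSum (q+1) 3 = binSum q 3 + binSum q 2
    exact binSum_succ_succ q 2
  · show binSum (q+1) 2 = binSum q 2 + binSum q 1
    exact binSum_succ_succ q 1
  · show binSum (q+1) 1 = binSum q 1 + binSum q 0
    exact binSum_succ_succ q 0
  · show binSum (q+1) 0 = binSum q 0 + 0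
    simp [binSum]
  · rfl

lemma vol_eq_sum {u : ℕ} (σ : State u) (q : ℕ) :
    vol σ q = ∑ y : Fin u, wt q (σ y : ℕ) := by
  have hfiber : ∑ y : Fin u, wt q (σ y : ℕ) =
      ∑ j ∈ Finset.range 5, ∑ y ∈ Finset.univ.filter (fun y => (σ y : ℕ) = j),
        wt q (σ y : ℕ) := by
    refine (Finset.sum_fiberwise_of_maps_to (fun y _ => ?_) _).symm
    exact Finset.mem_range.mpr (σ y).isLt
  rw [hfiber]
  have hcong : ∀ j ∈ Finset.range 5,
      (∑ y ∈ Finset.univ.filter (fun y => (σ y : ℕ) = j), wt q (σ y : ℕ)) =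
      (Finset.univ.filter (fun y => (σ y : ℕ) = j)).card * wt q j := by
    intro j _
    have heq : ∀ y ∈ Finset.univ.filter (fun y => (σ y : ℕ) = j),
        wt q (σ y : ℕ) = wt q j := fun y hy => by
      rw [(Finset.mem_filter.mp hy).2]
    rw [Finset.sum_congr rfl heq, Finset.sum_const, smul_eq_mul]
  rw [Finset.sum_congr rfl hcong]
  have hcount : ∀ j : ℕ, stCount σ j = (Finset.univ.filter (fun y => (σ y : ℕ) = j)).card := by
    intro j
    have : levelSet σ j = ↑(Finset.univ.filter (fun y => (σ y : ℕ) = j)) := by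
      ext y; simp [levelSet]
    rw [stCount, this, Set.ncard_coe_finset]
  have h5 : (∑ j ∈ Finset.range 5,
      (Finset.univ.filter (fun y => (σ y : ℕ) = j)).card * wt q j) =
      (∑ j ∈ Finset.range 4,
      (Finset.univ.filter (fun y => (σ y : ℕ) = j)).card * wt q j) := by
    rw [Finset.sum_range_succ]
    simp [wt]
  rw [h5, vol]
  refine Finset.sum_congr rfl fun j hj => ?_
  rw [Finset.mem_range] at hj
  rw [hcount j, wt, if_pos (by omega)]

lemma vol_yes_add_no {u : ℕ} (σ : State u) (Q : Set (Fin u)) (q : ℕ) :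
    vol (yesState σ Q) q + vol (noState σ Q) q = vol σ (q + 1) := by
  rw [vol_eq_sum, vol_eq_sum, vol_eq_sum, ← Finset.sum_add_distrib]
  refine Finset.sum_congr rfl fun y _ => ?_
  have hle : (σ y : ℕ) ≤ 4 := by omega
  by_cases hy : y ∈ Q
  · have h1 : ((yesState σ Q y : ℕ)) = (σ y : ℕ) := by
      simp [yesState, hy]; omega
    have h2 : ((noState σ Q y : ℕ)) = min ((σ y : ℕ) + 1) 4 := by
      simp [noState, hy]
    rw [h1, h2, wt_succ _ _ hle]
  · have h1 : ((yesState σ Q y : ℕ)) = min ((σ y : ℕ) + 1) 4 := by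
      simp [yesState, hy]
    have h2 : ((noState σ Q y : ℕ)) = (σ y : ℕ) := by
      simp [noState, hy]; omega
    rw [h1, h2, wt_succ _ _ hle]
    omega

/-- If `q = ch(σ) ≥ 1` and the question `Q` is balanced, i.e.
`|w_{q-1}(σ_yes) - w_{q-1}(σ_no)| ≤ 1`, then both resulting states have
character at most `q - 1`. -/
theorem character_decrease_of_balanced (m : ℕ) (hm : 1 ≤ m)
    (σ : State (2 ^ m)) (Q : Set (Fin (2 ^ m))) (q : ℕ)
    (hq : q = ch σ) (hq1 : 1 ≤ q)
    (hbal : |(vol (yesState σ Q) (q - 1) : ℤ) - (vol (noState σ Q) (q - 1) : ℤ)| ≤ 1) :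
    ch (yesState σ Q) ≤ q - 1 ∧ ch (noState σ Q) ≤ q - 1 := by
  -- the defining set of `ch σ` is nonempty, since `ch σ = q ≥ 1 > 0 = sInf ∅`
  have hne : {p | vol σ p ≤ 2 ^ p}.Nonempty := by
    by_contra h
    rw [Set.not_nonempty_iff_eq_empty] at h
    have : ch σ = 0 := by rw [ch, h, Nat.sInf_empty]
    omega
  have hmem : vol σ q ≤ 2 ^ q := by
    rw [hq]; exact Nat.sInf_mem hne
  have hsum : vol (yesState σ Q) (q - 1) + vol (noState σ Q) (q - 1) = vol σ q := by
    have := vol_yes_add_no σ Q (q - 1)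
    rwa [Nat.sub_add_cancel hq1] at this
  have hpow : 2 ^ q = 2 ^ (q - 1) + 2 ^ (q - 1) := by
    have h2 : 2 ^ (q - 1) * 2 = 2 ^ (q - 1 + 1) := (pow_succ 2 (q - 1)).symm
    have h3 : q - 1 + 1 = q := Nat.sub_add_cancel hq1
    rw [h3] at h2
    omega
  have habs := abs_le.mp hbal
  have hy : vol (yesState σ Q) (q - 1) ≤ 2 ^ (q - 1) := by omega
  have hn : vol (noState σ Q) (q - 1) ≤ 2 ^ (q - 1) := by omega
  exact ⟨Nat.sInf_le hy, Nat.sInf_le hn⟩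

end UlamRenyi
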